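/- arXiv:0901.4349 — 3 statements merged into one kernel-verified Lean document; each statement's English description precedes it below -/
import Mathlib

section
/- For every natural number n ≥ 1, every complex root t of the polynomial r (n+1) − r n satisfies |t| < 1/2. -/
/-!
Write `t = u / (u² - 1)` with `‖u‖ ≤ 1`; this is possible since the two solutions `u` have product
`-1`. The characteristic roots of the recurrence are then `1 / (1 - u)` and `u / (1 + u)`, and
Binet's formula turns `r (n + 1) - r n = 0` into `u (1 + u)ⁿ⁺¹ = -uⁿ (1 - u)ⁿ⁺¹`. With
`x = ‖u‖`, `P = ‖1 + u‖` and `Q = ‖1 - u‖`, taking norms gives `x Q ≤ P ≤ Q`, while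
`‖t‖ ≥ 1/2` means `P Q ≤ 2 x`. Since `P² + Q² = 2 (1 + x²)` (parallelogram law), these force
`x = 1` and `P = Q`, i.e. `u = ±i` and `t = ∓i/2`. There the characteristic root is double, and the
double-root form of Binet's formula shows that `t` is not a root after all.
-/

open Polynomial

/-- The polynomials `r k ∈ ℤ[X]` defined by `r 0 = 0`, `r 1 = 1`,
`r (k+2) = (1 - 2X) r (k+1) + X r k`. -/
noncomputable def r : ℕ → Polynomial ℤ
  | 0 => 0
  | 1 => 1
  | (k + 2) => (1 - 2 * X) * r (k + 1) + X * r k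

section Recurrence

variable {A : Type*} [CommRing A] (t : A)

theorem aeval_r_add_two (k : ℕ) :
    aeval t (r (k + 2)) = (1 - 2 * t) * aeval t (r (k + 1)) + t * aeval t (r k) := by
  simp only [r, map_add, map_mul, map_sub, map_one, map_ofNat, aeval_X]

theorem aeval_r_succ_sub_r_add_two (k : ℕ) :
    aeval t (r (k + 3) - r (k + 2)) =
      (1 - 2 * t) * aeval t (r (k + 2) - r (k + 1)) + t * aeval t (r (k + 1) - r k) := by
  simp only [map_sub, aeval_r_add_two t (k + 1), aeval_r_add_two t k]
  ring

theorem aeval_r_succ_sub_r_mul {u : A} (htu : t * (u ^ 2 - 1) = u) (n : ℕ) :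
    aeval t (r (n + 1) - r n) * (1 + u ^ 2) * (1 - u ^ 2) ^ n =
      u * (1 + u) ^ (n + 1) + u ^ n * (1 - u) ^ (n + 1) := by
  induction n using Nat.twoStepInduction with
  | zero =>
    simp only [r, sub_zero, map_one, one_mul, pow_zero, mul_one, zero_add, pow_one]
    ring
  | one =>
    simp only [r, map_sub, map_add, map_mul, map_one, map_ofNat, map_zero, aeval_X]
    linear_combination 2 * (1 + u ^ 2) * htu
  | more k ih₀ ih₁ =>
    rw [aeval_r_succ_sub_r_add_two]
    linear_combination (1 + 2 * u - u ^ 2) * ih₁ - u * (1 - u ^ 2) * ih₀ +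
      (2 * aeval t (r (k + 2) - r (k + 1)) - aeval t (r (k + 1) - r k)) *
        (1 + u ^ 2) * (1 - u ^ 2) ^ (k + 1) * htu

theorem aeval_r_succ_sub_r_mul_of_double_root {a : A} (h₁ : 1 - 2 * t = 2 * a)
    (h₂ : t = -a ^ 2) (n : ℕ) : aeval t (r (n + 1) - r n) * a = a ^ n * ((n + 1) * a - n) := by
  induction n using Nat.twoStepInduction with
  | zero => simp [r]
  | one =>
    simp only [r, map_sub, map_add, map_mul, map_one, map_ofNat, map_zero, aeval_X]
    push_cast
    linear_combination a * h₁
  | more k ih₀ ih₁ =>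
    rw [aeval_r_succ_sub_r_add_two]
    push_cast at ih₀ ih₁ ⊢
    linear_combination 2 * a * ih₁ - a ^ 2 * ih₀ + aeval t (r (k + 2) - r (k + 1)) * a * h₁ +
      aeval t (r (k + 1) - r k) * a * h₂

end Recurrence

theorem aeval_r_succ_sub_r_ne_zero {K : Type*} [Field K] [CharZero K] {t : K}
    (ht : 4 * t ^ 2 + 1 = 0) (n : ℕ) : aeval t (r (n + 1) - r n) ≠ 0 := by
  intro h₀
  have ha : (1 - 2 * t) / 2 ≠ 0 := by
    intro ha
    have : t = 1 / 2 := by linear_combination -ha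
    norm_num [this] at ht
  have hbinet := aeval_r_succ_sub_r_mul_of_double_root t (a := (1 - 2 * t) / 2) (by ring)
    (by linear_combination ht / 4) n
  rw [h₀, zero_mul, eq_comm, mul_eq_zero] at hbinet
  have hlin := hbinet.resolve_left (pow_ne_zero n ha)
  have : ((2 * n ^ 2 + 2 : ℕ) : K) = 0 := by
    push_cast
    linear_combination (n + 1) ^ 2 * ht + 2 * (2 * t * (n + 1) + 1 - n) * hlin
  exact Nat.cast_ne_zero.2 (by positivity) this

theorem Complex.exists_mul_sq_sub_one_eq_self {t : ℂ} (ht : t ≠ 0) :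
    ∃ u : ℂ, t * (u ^ 2 - 1) = u ∧ ‖u‖ ≤ 1 := by
  obtain ⟨v, hv⟩ := exists_quadratic_eq_zero (b := -1) (c := -t) ht
    (IsAlgClosed.exists_eq_mul_self _)
  have hv' : t * (v ^ 2 - 1) = v := by linear_combination hv
  have hv₀ : v ≠ 0 := by
    rintro rfl
    exact ht (by linear_combination -hv')
  rcases le_or_gt ‖v‖ 1 with h | h
  · exact ⟨v, hv', h⟩
  · refine ⟨-v⁻¹, ?_, ?_⟩
    · field_simp
      linear_combination -hv'
    · rw [norm_neg, norm_inv]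
      exact inv_le_one_of_one_le₀ h.le

theorem eq_one_and_eq_of_pow_eq {x P Q : ℝ} {m : ℕ} (hx₀ : 0 < x) (hx₁ : x ≤ 1) (hP : 0 ≤ P)
    (hQ : 0 ≤ Q) (hpow : P ^ (m + 2) = x ^ m * Q ^ (m + 2))
    (hsum : P ^ 2 + Q ^ 2 = 2 * (1 + x ^ 2)) (hprod : P * Q ≤ 2 * x) : x = 1 ∧ P = Q := by
  have hPQ : P ≤ Q := by
    refine le_of_pow_le_pow_left₀ (n := m + 2) (by omega) hQ ?_
    rw [hpow]
    exact mul_le_of_le_one_left (by positivity) (pow_le_one₀ hx₀.le hx₁)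
  have hxQ : x * Q ≤ P := by
    refine le_of_pow_le_pow_left₀ (n := m + 2) (by omega) hP ?_
    rw [hpow, mul_pow, pow_add]
    gcongr
    exact mul_le_of_le_one_right (by positivity) (pow_le_one₀ hx₀.le hx₁)
  have hQ₀ : 0 < Q := by nlinarith
  have hzero : (P - x * Q) * (Q - x * P) = 0 := by
    refine le_antisymm ?_ (mul_nonneg (by linarith) (by nlinarith))
    -- by `hsum`, the product equals `(1 + x²) (P Q - 2 x)`
    nlinarith [mul_le_mul_of_nonneg_left hprod (by positivity : (0 : ℝ) ≤ 1 + x ^ 2)]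
  rcases mul_eq_zero.1 hzero with h | h
  · have hx : x ^ m * Q ^ (m + 2) * (x ^ 2 - 1) = 0 := by
      rw [show P = x * Q by linarith] at hpow
      linear_combination hpow
    have hx : x = 1 := by
      have := (mul_eq_zero.1 hx).resolve_left (by positivity)
      nlinarith
    subst hx
    exact ⟨rfl, by linarith⟩
  · have hPQ' : P = Q := le_antisymm hPQ (by nlinarith)
    exact ⟨by nlinarith, hPQ'⟩

theorem Complex.sq_eq_neg_one_of_norm_add_eq_norm_sub {u : ℂ} (hu : ‖u‖ = 1)
    (h : ‖1 + u‖ = ‖1 - u‖) : u ^ 2 = -1 := by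
  have hre : u.re = 0 := by
    have := congrArg (· ^ 2) h
    simp only [Complex.sq_norm, Complex.normSq_apply, Complex.add_re, Complex.add_im,
      Complex.sub_re, Complex.sub_im, Complex.one_re, Complex.one_im] at this
    linarith
  have him : u.im ^ 2 = 1 := by
    have := congrArg (· ^ 2) hu
    simp only [Complex.sq_norm, Complex.normSq_apply, hre] at this
    linarith
  apply Complex.ext
  · simp only [sq, Complex.mul_re, Complex.neg_re, Complex.one_re, hre]
    linarith
  · simp [sq, hre]

theorem Complex.sq_eq_neg_one_of_pow_add_pow_eq_zero {u : ℂ} {n : ℕ} (hn : 1 ≤ n)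
    (hu₀ : u ≠ 0) (hu₁ : ‖u‖ ≤ 1) (hE : u * (1 + u) ^ (n + 1) + u ^ n * (1 - u) ^ (n + 1) = 0)
    (hle : ‖1 - u ^ 2‖ ≤ 2 * ‖u‖) : u ^ 2 = -1 := by
  obtain ⟨m, rfl⟩ := Nat.exists_eq_add_of_le' hn
  have hx₀ : 0 < ‖u‖ := norm_pos_iff.2 hu₀
  have hpow : ‖1 + u‖ ^ (m + 2) = ‖u‖ ^ m * ‖1 - u‖ ^ (m + 2) := by
    have := congrArg norm (eq_neg_of_add_eq_zero_left hE)
    simp only [norm_mul, norm_neg, norm_pow] at this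
    refine mul_left_cancel₀ hx₀.ne' ?_
    linear_combination this
  have hsum : ‖1 + u‖ ^ 2 + ‖1 - u‖ ^ 2 = 2 * (1 + ‖u‖ ^ 2) := by
    simpa using parallelogram_law_with_norm ℝ (1 : ℂ) u
  have hprod : ‖1 + u‖ * ‖1 - u‖ ≤ 2 * ‖u‖ := by
    rwa [← norm_mul, show (1 + u) * (1 - u) = 1 - u ^ 2 by ring]
  obtain ⟨hx, hPQ⟩ :=
    eq_one_and_eq_of_pow_eq hx₀ hu₁ (norm_nonneg _) (norm_nonneg _) hpow hsum hprod
  exact Complex.sq_eq_neg_one_of_norm_add_eq_norm_sub hx hPQ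

/-- For `n ≥ 1`, every complex root of `r (n+1) - r n` lies strictly inside the
circle `|t| = 1/2`. -/
theorem roots_inside (n : ℕ) (hn : 1 ≤ n) (t : ℂ)
    (ht : Polynomial.aeval t (r (n + 1) - r n) = 0) :
    ‖t‖ < 1 / 2 := by
  by_contra! hbig
  have ht₀ : t ≠ 0 := by
    rintro rfl
    norm_num at hbig
  obtain ⟨u, htu, hu₁⟩ := Complex.exists_mul_sq_sub_one_eq_self ht₀
  have hu₀ : u ≠ 0 := by
    rintro rfl
    exact ht₀ (by linear_combination -htu)
  have hbinet : u * (1 + u) ^ (n + 1) + u ^ n * (1 - u) ^ (n + 1) = 0 := by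
    rw [← aeval_r_succ_sub_r_mul t htu, ht, zero_mul, zero_mul]
  have hle : ‖1 - u ^ 2‖ ≤ 2 * ‖u‖ := by
    have : ‖u‖ = ‖t‖ * ‖1 - u ^ 2‖ := by
      rw [← norm_neg (1 - u ^ 2), neg_sub, ← norm_mul, htu]
    nlinarith [norm_nonneg (1 - u ^ 2)]
  have hu₂ := Complex.sq_eq_neg_one_of_pow_add_pow_eq_zero hn hu₀ hu₁ hbinet hle
  exact aeval_r_succ_sub_r_ne_zero
    (by linear_combination (2 * t - u) * (t * hu₂ - htu) + hu₂) n ht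
end

section
/- For every natural number n ≥ 1, every complex root t of the polynomial r (n+1) + 2·X · r n satisfies |t| > 1/2. -/
/-!
Evaluated at `t`, the polynomials `r k` form the Lucas sequence `S` with
`S (k + 2) = (1 - 2t) S (k + 1) + t S k`. If `l, m` are the roots of `x² - (1 - 2t) x - t`, then
`S (k + 1) - m S k = l ^ k`, so the root condition `S (n + 1) + 2t S n = 0` becomes
`l ^ n (1 - m) = m ^ n (1 - l)`. Hence `|l|² - |m|²` and `|1 - l|² - |1 - m|²` are both zero or
have the same strict sign.

With `d = l - m` we have `d² = 1 + 4t²`, and the two differences are `Re d - 2 Re (d t̄)` and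
`-Re d - 2 Re (d t̄)`. Their product is `-(1 - 4|t|²)((Re d)² + 4 (Im t)²)`, which is `≤ 0` when
`|t| ≤ 1/2`. So both vanish, which forces `d = 0`. For the double root `l = m` we have
`S (k + 1) = (k + 1) l ^ k`, and the root condition becomes `n² + 1 = 0`.
-/

open Polynomial Complex ComplexConjugate

/-- `S` is the Lucas sequence of the first kind `U(P, Q)`. -/
structure IsLucasU {R : Type*} [CommRing R] (P Q : R) (S : ℕ → R) : Prop where
  zero : S 0 = 0
  one : S 1 = 1
  add_two : ∀ k, S (k + 2) = P * S (k + 1) - Q * S k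

namespace IsLucasU

variable {R : Type*} [CommRing R] {P Q l m : R} {S : ℕ → R}

theorem sub_mul_eq_pow (hS : IsLucasU P Q S) (hsum : l + m = P) (hprod : l * m = Q) (k : ℕ) :
    S (k + 1) - m * S k = l ^ k := by
  induction k with
  | zero => simp [hS.zero, hS.one]
  | succ k ih => linear_combination hS.add_two k + l * ih - S (k + 1) * hsum + S k * hprod

theorem eq_of_double_root (hS : IsLucasU P Q S) (hsum : l + l = P) (hprod : l * l = Q) (k : ℕ) :
    S (k + 1) = (k + 1) * l ^ k := by
  induction k with
  | zero => simp [hS.one]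
  | succ k ih =>
    push_cast
    linear_combination hS.sub_mul_eq_pow hsum hprod (k + 1) + l * ih

end IsLucasU

theorem exists_add_eq_and_mul_eq {K : Type*} [Field K] [IsAlgClosed K] [NeZero (2 : K)]
    (P Q : K) : ∃ l m : K, l + m = P ∧ l * m = Q := by
  obtain ⟨l, hl⟩ :=
    exists_quadratic_eq_zero one_ne_zero (IsAlgClosed.exists_eq_mul_self (discrim 1 (-P) Q))
  obtain ⟨m, -, hsum, hprod⟩ :=
    vieta_formula_quadratic (b := P) (c := Q) (x := l) (by linear_combination hl)
  exact ⟨l, m, hsum, hprod⟩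

theorem pos_mul_or_eq_and_eq_of_pow_mul_eq {a b c e : ℝ} {n : ℕ} (hn : n ≠ 0) (ha : 0 < a)
    (hb : 0 < b) (hc : 0 < c) (he : 0 < e) (h : a ^ n * c = b ^ n * e) :
    0 < (a - b) * (e - c) ∨ a = b ∧ e = c := by
  rcases lt_trichotomy a b with hab | rfl | hab
  · have : a ^ n < b ^ n := pow_lt_pow_left₀ hab ha.le hn
    have : e < c :=
      lt_of_mul_lt_mul_left (by rw [← h]; exact mul_lt_mul_of_pos_right this hc) (pow_pos hb n).le
    exact Or.inl (mul_pos_of_neg_of_neg (by linarith) (by linarith))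
  · exact Or.inr ⟨rfl, (mul_left_cancel₀ (pow_pos ha n).ne' h).symm⟩
  · have : b ^ n < a ^ n := pow_lt_pow_left₀ hab hb.le hn
    have : c < e :=
      lt_of_mul_lt_mul_left (by rw [h]; exact mul_lt_mul_of_pos_right this he) (pow_pos ha n).le
    exact Or.inl (mul_pos (by linarith) (by linarith))

section CharacteristicRoots

variable {d l m t : ℂ}

theorem re_im_of_sq_eq_one_add_four_mul_sq (hd : d ^ 2 = 1 + 4 * t ^ 2) :
    d.re ^ 2 - d.im ^ 2 = 1 + 4 * t.re ^ 2 - 4 * t.im ^ 2 ∧ d.re * d.im = 4 * t.re * t.im := by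
  have hre := congrArg re hd
  have him := congrArg im hd
  simp only [sq, mul_re, mul_im, add_re, add_im, one_re, one_im, re_ofNat, im_ofNat] at hre him
  constructor <;> linarith

theorem four_mul_sq_re_mul_conj_le_sq_re (hd : d ^ 2 = 1 + 4 * t ^ 2) (ht : ‖t‖ ≤ 1 / 2) :
    4 * (d * conj t).re ^ 2 ≤ d.re ^ 2 := by
  obtain ⟨h1, h2⟩ := re_im_of_sq_eq_one_add_four_mul_sq hd
  have htsq : t.re ^ 2 + t.im ^ 2 ≤ 1 / 4 := by
    rw [sq, sq, ← normSq_apply, ← Complex.sq_norm]; nlinarith [norm_nonneg t]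
  have key : d.re ^ 2 - 4 * (d * conj t).re ^ 2
      = (1 - 4 * (t.re ^ 2 + t.im ^ 2)) * (d.re ^ 2 + 4 * t.im ^ 2) := by
    simp only [mul_re, conj_re, conj_im]
    linear_combination 4 * t.im ^ 2 * h1 - 8 * t.re * t.im * h2
  nlinarith [mul_nonneg (by linarith : 0 ≤ 1 - 4 * (t.re ^ 2 + t.im ^ 2))
    (by positivity : 0 ≤ d.re ^ 2 + 4 * t.im ^ 2)]

theorem eq_zero_of_re_eq_zero_of_re_mul_conj_eq_zero (hd : d ^ 2 = 1 + 4 * t ^ 2)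
    (hre : d.re = 0) (hre' : (d * conj t).re = 0) : d = 0 := by
  obtain ⟨h1, -⟩ := re_im_of_sq_eq_one_add_four_mul_sq hd
  simp only [mul_re, conj_re, conj_im, hre, zero_mul, mul_neg, zero_sub, neg_neg] at hre' h1
  have him : d.im = 0 := by
    rcases mul_eq_zero.1 hre' with h | h
    · exact h
    · nlinarith [sq_nonneg d.im, sq_nonneg t.re, h]
  exact Complex.ext hre him

theorem normSq_sub_normSq_eq (hsum : l + m = 1 - 2 * t) :
    normSq l - normSq m = (l - m).re - 2 * ((l - m) * conj t).re := by
  obtain ⟨a, b⟩ := l; obtain ⟨c, d⟩ := m; obtain ⟨u, v⟩ := t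
  simp only [Complex.ext_iff, normSq_apply, sub_re, sub_im, one_re, one_im, mul_re, mul_im,
    add_re, add_im, re_ofNat, im_ofNat, conj_re, conj_im] at hsum ⊢
  linear_combination (a - c) * hsum.1 + (b - d) * hsum.2

theorem sub_sq_eq (hsum : l + m = 1 - 2 * t) (hprod : l * m = -t) :
    (l - m) ^ 2 = 1 + 4 * t ^ 2 := by
  linear_combination (l + m + 1 - 2 * t) * hsum - 4 * hprod

theorem normSq_one_sub_sub_normSq_one_sub_eq (hsum : l + m = 1 - 2 * t) :
    normSq (1 - l) - normSq (1 - m) = -(l - m).re - 2 * ((l - m) * conj t).re := by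
  have hsum' : (1 - l) + (1 - m) = 1 - 2 * -t := by linear_combination -hsum
  rw [normSq_sub_normSq_eq hsum', show 1 - l - (1 - m) = -(l - m) by ring]
  simp only [map_neg, mul_neg, neg_mul, neg_neg, neg_re]

theorem normSq_sub_mul_normSq_one_sub_sub_nonpos (hsum : l + m = 1 - 2 * t) (hprod : l * m = -t)
    (ht : ‖t‖ ≤ 1 / 2) :
    (normSq l - normSq m) * (normSq (1 - l) - normSq (1 - m)) ≤ 0 := by
  rw [normSq_sub_normSq_eq hsum, normSq_one_sub_sub_normSq_one_sub_eq hsum]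
  nlinarith [four_mul_sq_re_mul_conj_le_sq_re (sub_sq_eq hsum hprod) ht]

theorem eq_of_normSq_eq_of_normSq_one_sub_eq (hsum : l + m = 1 - 2 * t) (hprod : l * m = -t)
    (h : normSq l = normSq m) (h' : normSq (1 - l) = normSq (1 - m)) : l = m := by
  have hA := normSq_sub_normSq_eq hsum
  have hB := normSq_one_sub_sub_normSq_one_sub_eq hsum
  rw [h, sub_self] at hA
  rw [h', sub_self] at hB
  exact sub_eq_zero.1 (eq_zero_of_re_eq_zero_of_re_mul_conj_eq_zero (sub_sq_eq hsum hprod)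
    (by linarith) (by linarith))

end CharacteristicRoots

theorem isLucasU_aeval_r {A : Type*} [CommRing A] (t : A) :
    IsLucasU (1 - 2 * t) (-t) (fun k ↦ aeval t (r k)) where
  zero := by simp [r]
  one := by simp [r]
  add_two k := by simp [r, map_ofNat]

theorem pow_add_one_sub_mul_eq_zero {R : Type*} [CommRing R] {t l m : R} {S : ℕ → R} {n : ℕ}
    (hS : IsLucasU (1 - 2 * t) (-t) S) (hsum : l + m = 1 - 2 * t) (hprod : l * m = -t)
    (hroot : S (n + 1) + 2 * t * S n = 0) : l ^ n + (1 - l) * S n = 0 := by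
  linear_combination hroot - hS.sub_mul_eq_pow hsum hprod n - S n * hsum

section RootOutsideDisk

variable {t l m : ℂ} {S : ℕ → ℂ} {n : ℕ}

theorem ne_of_isLucasU_root (hS : IsLucasU (1 - 2 * t) (-t) S) (hn : n ≠ 0)
    (hroot : S (n + 1) + 2 * t * S n = 0) (hsum : l + m = 1 - 2 * t) (hprod : l * m = -t) :
    l ≠ m := by
  rintro rfl
  obtain ⟨k, rfl⟩ := Nat.exists_eq_succ_of_ne_zero hn
  have hl0 : l ≠ 0 := by
    rintro rfl
    have ht : t = 0 := by linear_combination hprod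
    simp [ht] at hsum
  have hlk : l * k = k + 1 := by
    have e := pow_add_one_sub_mul_eq_zero hS hsum hprod hroot
    rw [hS.eq_of_double_root hsum hprod k] at e
    have : l ^ k * (l * k - (k + 1)) = 0 := by linear_combination -e
    exact sub_eq_zero.1 ((mul_eq_zero.1 this).resolve_left (pow_ne_zero k hl0))
  have : (((k + 1) ^ 2 + 1 : ℕ) : ℂ) = 0 := by
    push_cast
    linear_combination (k : ℂ) ^ 2 * (2 * hprod - hsum) - (2 * l * k + 2) * hlk
  exact absurd (Nat.cast_eq_zero.1 this) (by positivity)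

theorem one_half_lt_norm_of_isLucasU_root (hS : IsLucasU (1 - 2 * t) (-t) S) (hn : n ≠ 0)
    (hroot : S (n + 1) + 2 * t * S n = 0) : 1 / 2 < ‖t‖ := by
  by_contra! ht
  have ht0 : t ≠ 0 := by
    rintro rfl
    have := hS.sub_mul_eq_pow (l := 1) (m := 0) (by ring) (by ring) n
    simp_all
  obtain ⟨l, m, hsum, hprod⟩ := exists_add_eq_and_mul_eq (1 - 2 * t) (-t)
  have hl := pow_add_one_sub_mul_eq_zero hS hsum hprod hroot
  have hm := pow_add_one_sub_mul_eq_zero hS ((add_comm m l).trans hsum)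
    ((mul_comm m l).trans hprod) hroot
  have heq : l ^ n * (1 - m) = m ^ n * (1 - l) := by
    linear_combination (1 - m) * hl - (1 - l) * hm
  have hlm : l * m ≠ 0 := hprod ▸ neg_ne_zero.2 ht0
  have hlm' : (1 - l) * (1 - m) ≠ 0 := by
    rwa [show (1 - l) * (1 - m) = t by linear_combination hprod - hsum]
  rcases pos_mul_or_eq_and_eq_of_pow_mul_eq hn (normSq_pos.2 (left_ne_zero_of_mul hlm))
      (normSq_pos.2 (right_ne_zero_of_mul hlm)) (normSq_pos.2 (right_ne_zero_of_mul hlm'))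
      (normSq_pos.2 (left_ne_zero_of_mul hlm')) (by simpa using congrArg normSq heq)
    with hpos | ⟨h, h'⟩
  · linarith [normSq_sub_mul_normSq_one_sub_sub_nonpos hsum hprod ht]
  · exact ne_of_isLucasU_root hS hn hroot hsum hprod
      (eq_of_normSq_eq_of_normSq_one_sub_eq hsum hprod h h')

end RootOutsideDisk

/-- For `n ≥ 1`, every complex root of `r (n+1) + 2X · r n` lies strictly outside
the circle `|t| = 1/2`. -/
theorem roots_outside (n : ℕ) (hn : 1 ≤ n) (t : ℂ)
    (ht : Polynomial.aeval t (r (n + 1) + 2 * X * r n) = 0) :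
    1 / 2 < ‖t‖ :=
  one_half_lt_norm_of_isLucasU_root (isLucasU_aeval_r t) (Nat.one_le_iff_ne_zero.1 hn)
    (by simpa [map_ofNat] using ht)
end

section
/- For all natural numbers n ≥ 2 and 1 ≤ j ≤ n, the polynomial H n j := X^(j−1) · (1 + 2·X) · r (n−j) + (−1)^j · (r j − r (j−1)) · (r n + 2·X · r (n−1)) is divisible by r n − r (n−1) in ℤ[X]. -/
open Polynomial

/-- The polynomial `H n j` of the divisibility lemma. -/
noncomputable def H (n j : ℕ) : Polynomial ℤ :=
  X ^ (j - 1) * (1 + 2 * X) * r (n - j) +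
    (-1) ^ j * (r j - r (j - 1)) * (r n + 2 * X * r (n - 1))

theorem dvd_of_two_step_recurrence {R : Type*} [CommSemiring R] {u : ℕ → R} {a b d : R}
    {N : ℕ} (hrec : ∀ k, k + 2 ≤ N → u (k + 2) = a * u (k + 1) + b * u k)
    (h0 : d ∣ u 0) (h1 : d ∣ u 1) : ∀ k ≤ N, d ∣ u k :=
  Nat.twoStepInduction (fun _ => h0) (fun _ => h1) fun k ih ih' hk => by
    rw [hrec k hk]
    exact dvd_add ((ih' (by omega)).mul_left a) ((ih (by omega)).mul_left b)

lemma r_zero : r 0 = 0 := rfl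

lemma r_one : r 1 = 1 := rfl

lemma r_add_two (k : ℕ) : r (k + 2) = (1 - 2 * X) * r (k + 1) + X * r k := rfl

/-- Both summands of `H n j` satisfy this recurrence in `j`: the first by the recurrence of
`r (n - j)`, which needs `j ≤ n`, the second because `r j - r (j - 1)` satisfies that of `r`. -/
lemma H_add_three {n k : ℕ} (hk : k + 3 ≤ n) :
    H n (k + 3) = -(1 - 2 * X) * H n (k + 2) + X * H n (k + 1) := by
  obtain ⟨t, rfl⟩ := Nat.exists_eq_add_of_le' hk
  simp only [H, show t + (k + 3) - (k + 3) = t by omega,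
    show t + (k + 3) - (k + 2) = t + 1 by omega, show t + (k + 3) - (k + 1) = t + 2 by omega,
    show t + (k + 3) - 1 = t + (k + 2) by omega, show k + 3 - 1 = k + 2 by omega,
    show k + 2 - 1 = k + 1 by omega, Nat.add_sub_cancel]
  rw [r_add_two (k + 1), r_add_two k, r_add_two t]
  ring

lemma H_one (n : ℕ) : H n 1 = -(r n - r (n - 1)) := by
  simp only [H, Nat.sub_self, r_zero, r_one]
  ring

lemma H_two {n : ℕ} (hn : 2 ≤ n) : H n 2 = r n - r (n - 1) := by
  obtain ⟨s, rfl⟩ := Nat.exists_eq_add_of_le' hn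
  simp only [H, Nat.add_sub_cancel, show s + 2 - 1 = s + 1 by omega]
  rw [r_add_two s, r_add_two 0, r_zero, r_one]
  ring

/-- For `n ≥ 2` and `1 ≤ j ≤ n`, the polynomial `H n j` is divisible by
`r n - r (n-1)` in `ℤ[X]`. -/
theorem rn_sub_dvd_H (n j : ℕ) (hn : 2 ≤ n) (hj : 1 ≤ j) (hjn : j ≤ n) :
    (r n - r (n - 1)) ∣ H n j := by
  obtain ⟨k, rfl⟩ := Nat.exists_eq_add_of_le' hj
  refine dvd_of_two_step_recurrence (u := fun i => H n (i + 1)) (a := -(1 - 2 * X)) (b := X)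
    (N := n - 1) ?_ ?_ ?_ k (by omega)
  · intro i hi
    exact H_add_three (by omega)
  · simp only [zero_add, H_one, dvd_neg, dvd_refl]
  · simp only [H_two hn, dvd_refl]
end
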